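/- arXiv:2302.09827 — 3 statements merged into one kernel-verified Lean document; each statement's English description precedes it below -/
import Mathlib

section
/- For the free group F_2 = ⟨g⟩ * ⟨h⟩ with the (non-standard) symmetric generating set {g, g⁻¹, h, h⁻¹, g·h⁻¹, h·g⁻¹}, the number of elements of word length exactly r ≥ 1 is 6·4^(r-1). -/
/-- The two standard generators of the free group `F₂`. -/
def fgG : FreeGroup (Fin 2) := FreeGroup.of 0
def fgH : FreeGroup (Fin 2) := FreeGroup.of 1

/-- The non-standard symmetric generating set `{g, g⁻¹, h, h⁻¹, g·h⁻¹, h·g⁻¹}` of `F₂`. -/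
def genS : Set (FreeGroup (Fin 2)) := {fgG, fgG⁻¹, fgH, fgH⁻¹, fgG * fgH⁻¹, fgH * fgG⁻¹}

/-- Word length with respect to the generating set `genS`: the least `n` such that `x`
is a product of `n` elements of `genS`. -/
noncomputable def wlen (x : FreeGroup (Fin 2)) : ℕ :=
  sInf {n : ℕ | ∃ l : List (FreeGroup (Fin 2)),
    l.length = n ∧ (∀ y ∈ l, y ∈ genS) ∧ l.prod = x}

/-!
`F₂` is the fundamental group of the theta graph (two vertices joined by three edges
`e₀, e₁, e₂`), with `g = e₀ e₂⁻¹` and `h = e₁ e₂⁻¹`; then `S = {eᵢ eⱼ⁻¹ : i ≠ j}`.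
Reduced loops at the base vertex are the alternating products `e_{s₀} e_{s₁}⁻¹ e_{s₂} ⋯`
with consecutive indices distinct, and every element is represented by exactly one of them
(spelled in `g, h` such a loop is a reduced word). Prepending a generator `eᵢ eⱼ⁻¹` to a
reduced loop and cancelling backtracks lengthens it by at most two, so the `S`-length of an
element is half the length of its reduced loop. Hence the sphere of radius `r` is in
bijection with the words of length `2r` in three letters with no letter repeated
consecutively, of which there are `3 · 2^(2r-1) = 6 · 4^(r-1)`.
-/

namespace List

variable {α : Type*} [Finite α] {R : α → α → Prop} {k : ℕ}

instance finite_isChain_cons_length (x : α) (n : ℕ) :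
    Finite {l : List α // (x :: l).IsChain R ∧ l.length = n} :=
  ((finite_length_eq α n).subset fun _ h => h.2).to_subtype

theorem card_isChain_cons (hR : ∀ x, Nat.card {y // R x y} = k) (n : ℕ) (x : α) :
    Nat.card {l : List α // (x :: l).IsChain R ∧ l.length = n} = k ^ n := by
  induction n generalizing x with
  | zero =>
    have : Unique {l : List α // (x :: l).IsChain R ∧ l.length = 0} :=
      ⟨⟨⟨[], isChain_singleton x, rfl⟩⟩, fun ⟨l, _, hl⟩ => Subtype.ext (length_eq_zero_iff.mp hl)⟩
    rw [pow_zero, Nat.card_unique]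
  | succ n ih =>
    have := Fintype.ofFinite {y // R x y}
    let e : {l : List α // (x :: l).IsChain R ∧ l.length = n + 1} ≃
        Σ y : {y // R x y}, {l : List α // (y.1 :: l).IsChain R ∧ l.length = n} :=
      { toFun := fun
          | ⟨y :: l, h, hl⟩ => ⟨⟨y, (isChain_cons_cons.mp h).1⟩, l, (isChain_cons_cons.mp h).2,
              Nat.succ_injective hl⟩
        invFun := fun ⟨y, l, h, hl⟩ => ⟨y.1 :: l, isChain_cons_cons.mpr ⟨y.2, h⟩, by simp [hl]⟩
        left_inv := fun | ⟨y :: l, h, hl⟩ => rfl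
        right_inv := fun ⟨y, l, h, hl⟩ => rfl }
    rw [Nat.card_congr e, Nat.card_sigma]
    simp only [ih, Finset.sum_const, Finset.card_univ, smul_eq_mul, ← Nat.card_eq_fintype_card, hR]
    ring

theorem card_isChain (hR : ∀ x, Nat.card {y // R x y} = k) (n : ℕ) :
    Nat.card {l : List α // l.IsChain R ∧ l.length = n + 1} = Nat.card α * k ^ n := by
  have := Fintype.ofFinite α
  let e : {l : List α // l.IsChain R ∧ l.length = n + 1} ≃
      Σ x : α, {l : List α // (x :: l).IsChain R ∧ l.length = n} :=
    { toFun := fun | ⟨x :: l, h, hl⟩ => ⟨x, l, h, Nat.succ_injective hl⟩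
      invFun := fun ⟨x, l, h, hl⟩ => ⟨x :: l, h, by simp [hl]⟩
      left_inv := fun | ⟨x :: l, h, hl⟩ => rfl
      right_inv := fun ⟨x, l, h, hl⟩ => rfl }
  rw [Nat.card_congr e, Nat.card_sigma]
  simp only [card_isChain_cons hR, Finset.sum_const, Finset.card_univ, smul_eq_mul,
    ← Nat.card_eq_fintype_card]

end List

open FreeGroup

/-- `some i` is the edge `eᵢ` and `none` the edge `e₂`, which spans a maximal tree and so
represents `1`. -/
def thetaEdge : Option (Fin 2) → FreeGroup (Fin 2)
  | none => 1
  | some i => of i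

/-- The word of `e_{s₀}^{±1} e_{s₁}^{∓1} ⋯`, with first exponent `+1` iff `b`. -/
def pathWord : Bool → List (Option (Fin 2)) → List (Fin 2 × Bool)
  | _, [] => []
  | b, none :: s => pathWord (!b) s
  | b, some i :: s => (i, b) :: pathWord (!b) s

def pathElt (s : List (Option (Fin 2))) : FreeGroup (Fin 2) := mk (pathWord true s)

/-- Reads a word back as a path, re-inserting `e₂` wherever the exponents fail to alternate and
at the end if the last exponent is `+1`. -/
def pathOfWord : Bool → List (Fin 2 × Bool) → List (Option (Fin 2))
  | b, [] => if b then [] else [none]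
  | b, (i, c) :: w =>
    if c = b then some i :: pathOfWord (!b) w else none :: some i :: pathOfWord b w

def IsReducedLoop (s : List (Option (Fin 2))) : Prop := s.IsChain (· ≠ ·) ∧ Even s.length

@[simp]
theorem pathElt_nil : pathElt [] = 1 := rfl

theorem pathElt_cons_cons (u v : Option (Fin 2)) (s : List (Option (Fin 2))) :
    pathElt (u :: v :: s) = thetaEdge u * (thetaEdge v)⁻¹ * pathElt s := by
  cases u <;> cases v <;> simp [pathElt, pathWord, thetaEdge, of, inv_mk, invRev, mul_mk]

theorem head_pathWord {b : Bool} {v : Option (Fin 2)} {s : List (Option (Fin 2))}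
    (hs : (v :: s).IsChain (· ≠ ·)) {p : Fin 2 × Bool} (hp : p ∈ (pathWord b (v :: s)).head?) :
    v = some p.1 ∧ p.2 = b ∨ v = none ∧ p.2 = !b := by
  cases v with
  | some i =>
    simp only [pathWord, List.head?_cons, Option.mem_some_iff] at hp
    simp [← hp]
  | none =>
    cases s with
    | nil => simp [pathWord] at hp
    | cons w s =>
      cases w with
      | none => simp at hs
      | some j =>
        simp only [pathWord, List.head?_cons, Option.mem_some_iff] at hp
        simp [← hp]

theorem isReduced_pathWord (b : Bool) {s : List (Option (Fin 2))} (hs : s.IsChain (· ≠ ·)) :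
    IsReduced (pathWord b s) := by
  induction s generalizing b with
  | nil => exact IsReduced.nil
  | cons v s ih =>
    cases v with
    | none => exact ih _ hs.tail
    | some i =>
      refine List.isChain_cons.mpr ⟨fun p hp => ?_, ih _ hs.tail⟩
      cases s with
      | nil => simp [pathWord] at hp
      | cons w s =>
        have hiw : some i ≠ w := (List.isChain_cons_cons.mp hs).1
        rcases head_pathWord hs.tail hp with ⟨rfl, -⟩ | ⟨-, hp2⟩
        · exact fun h => absurd (congrArg some h) hiw
        · simp [hp2]

theorem pathOfWord_of_head_ne {b : Bool} {w : List (Fin 2 × Bool)}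
    (hw : ∀ p ∈ w.head?, p.2 = !b) (hb : w = [] → b = false) :
    pathOfWord b w = none :: pathOfWord (!b) w := by
  cases w with
  | nil => simp [pathOfWord, hb rfl]
  | cons p w =>
    obtain ⟨i, c⟩ := p
    obtain rfl : c = !b := hw _ rfl
    simp [pathOfWord]

theorem pathOfWord_pathWord {b : Bool} {s : List (Option (Fin 2))} (hs : s.IsChain (· ≠ ·))
    (hb : b = true ↔ Even s.length) : pathOfWord b (pathWord b s) = s := by
  induction s generalizing b with
  | nil => simp_all [pathWord, pathOfWord]
  | cons v s ih =>
    have hb' : (!b) = true ↔ Even s.length := by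
      rw [List.length_cons, Nat.even_add_one] at hb
      cases b <;> simp_all
    cases v with
    | some i => simp [pathWord, pathOfWord, ih hs.tail hb']
    | none =>
      rw [pathWord, pathOfWord_of_head_ne, ih hs.tail hb']
      · intro p hp
        cases s with
        | nil => simp [pathWord] at hp
        | cons w s =>
          rcases head_pathWord hs.tail hp with ⟨-, h⟩ | ⟨rfl, -⟩
          · simp [h]
          · simp at hs
      · intro h
        cases s with
        | nil => simpa using hb
        | cons w s =>
          cases w with
          | none => simp at hs
          | some j => simp [pathWord] at h

theorem toWord_pathElt {s : List (Option (Fin 2))} (hs : s.IsChain (· ≠ ·)) :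
    (pathElt s).toWord = pathWord true s := by
  rw [pathElt, toWord_mk, (isReduced_pathWord true hs).reduce_eq]

theorem pathElt_injOn : Set.InjOn pathElt {s | IsReducedLoop s} := by
  intro s ⟨hs, he⟩ s' ⟨hs', he'⟩ h
  have := congrArg (pathOfWord true) (congrArg toWord h)
  rwa [toWord_pathElt hs, toWord_pathElt hs', pathOfWord_pathWord hs (by simp [he]),
    pathOfWord_pathWord hs' (by simp [he'])] at this

theorem mem_genS_iff {x : FreeGroup (Fin 2)} :
    x ∈ genS ↔ ∃ u v, u ≠ v ∧ x = thetaEdge u * (thetaEdge v)⁻¹ := by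
  constructor
  · simp only [genS, Set.mem_insert_iff, Set.mem_singleton_iff]
    rintro (rfl | rfl | rfl | rfl | rfl | rfl)
    · exact ⟨some 0, none, by simp, by simp [thetaEdge, fgG]⟩
    · exact ⟨none, some 0, by simp, by simp [thetaEdge, fgG]⟩
    · exact ⟨some 1, none, by simp, by simp [thetaEdge, fgH]⟩
    · exact ⟨none, some 1, by simp, by simp [thetaEdge, fgH]⟩
    · exact ⟨some 0, some 1, by simp, rfl⟩
    · exact ⟨some 1, some 0, by simp, rfl⟩
  · rintro ⟨u, v, huv, rfl⟩
    simp only [genS, Set.mem_insert_iff, Set.mem_singleton_iff]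
    fin_cases u <;> fin_cases v <;> simp_all [thetaEdge, fgG, fgH]

theorem exists_reducedLoop_mul {u v : Option (Fin 2)} (huv : u ≠ v) {s : List (Option (Fin 2))}
    (hs : IsReducedLoop s) :
    ∃ s', IsReducedLoop s' ∧ s'.length ≤ s.length + 2 ∧
      pathElt s' = thetaEdge u * (thetaEdge v)⁻¹ * pathElt s := by
  match s, hs with
  | [], _ => exact ⟨[u, v], ⟨by simpa using huv, by simp⟩, le_rfl, by simp [pathElt_cons_cons]⟩
  | [_], ⟨_, he⟩ => simp at he
  | u' :: v' :: r, ⟨hs, he⟩ =>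
    obtain ⟨-, hr⟩ := List.isChain_cons_cons.mp hs
    have hre : Even r.length := by simpa [Nat.even_add_one] using he
    by_cases hvu' : v = u'
    · subst hvu'
      have hcancel : thetaEdge u * (thetaEdge v)⁻¹ * pathElt (v :: v' :: r) =
          thetaEdge u * (thetaEdge v')⁻¹ * pathElt r := by
        simp [pathElt_cons_cons, mul_assoc]
      rw [hcancel]
      by_cases huv' : u = v'
      · subst huv'
        exact ⟨r, ⟨hr.tail, hre⟩, by simp only [List.length_cons]; omega, by simp⟩
      · exact ⟨u :: v' :: r, ⟨List.isChain_cons_cons.mpr ⟨huv', hr⟩, he⟩, by simp,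
          pathElt_cons_cons ..⟩
    · refine ⟨u :: v :: u' :: v' :: r, ⟨?_, by simpa [Nat.even_add_one] using hre⟩, by simp,
        pathElt_cons_cons ..⟩
      exact List.isChain_cons_cons.mpr ⟨huv, List.isChain_cons_cons.mpr ⟨hvu', hs⟩⟩

theorem exists_reducedLoop_list_prod_mul {l : List (FreeGroup (Fin 2))} (hl : ∀ y ∈ l, y ∈ genS)
    {s : List (Option (Fin 2))} (hs : IsReducedLoop s) :
    ∃ s', IsReducedLoop s' ∧ s'.length ≤ 2 * l.length + s.length ∧
      pathElt s' = l.prod * pathElt s := by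
  induction l with
  | nil => exact ⟨s, hs, by simp, by simp⟩
  | cons y l ih =>
    obtain ⟨u, v, huv, rfl⟩ := mem_genS_iff.mp (hl y (by simp))
    obtain ⟨s₁, hs₁, hlen₁, hprod₁⟩ := ih fun y hy => hl y (by simp [hy])
    obtain ⟨s₂, hs₂, hlen₂, hprod₂⟩ := exists_reducedLoop_mul huv hs₁
    refine ⟨s₂, hs₂, ?_, by simp only [hprod₂, hprod₁, List.prod_cons, mul_assoc]⟩
    simp only [List.length_cons] at hlen₂ ⊢
    omega

theorem exists_genS_list_of_isReducedLoop :
    ∀ {s : List (Option (Fin 2))}, IsReducedLoop s →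
      ∃ l : List (FreeGroup (Fin 2)), 2 * l.length = s.length ∧ (∀ y ∈ l, y ∈ genS) ∧
        l.prod = pathElt s
  | [], _ => ⟨[], rfl, by simp, rfl⟩
  | [_], ⟨_, he⟩ => by simp at he
  | u :: v :: r, ⟨hs, he⟩ => by
    obtain ⟨huv, hr⟩ := List.isChain_cons_cons.mp hs
    obtain ⟨l, hlen, hl, hprod⟩ :=
      exists_genS_list_of_isReducedLoop (s := r) ⟨hr.tail, by simpa [Nat.even_add_one] using he⟩
    refine ⟨thetaEdge u * (thetaEdge v)⁻¹ :: l, ?_,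
      List.forall_mem_cons.mpr ⟨mem_genS_iff.mpr ⟨u, v, huv, rfl⟩, hl⟩,
      by simp [hprod, pathElt_cons_cons]⟩
    simp only [List.length_cons]
    omega

theorem two_mul_wlen_pathElt {s : List (Option (Fin 2))} (hs : IsReducedLoop s) :
    2 * wlen (pathElt s) = s.length := by
  obtain ⟨l, hlen, hl, hprod⟩ := exists_genS_list_of_isReducedLoop hs
  have hmem : l.length ∈ {n : ℕ | ∃ l : List (FreeGroup (Fin 2)),
      l.length = n ∧ (∀ y ∈ l, y ∈ genS) ∧ l.prod = pathElt s} := ⟨l, rfl, hl, hprod⟩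
  have hle : wlen (pathElt s) ≤ l.length := Nat.sInf_le hmem
  obtain ⟨l₀, hlen₀, hl₀, hprod₀⟩ : ∃ l₀ : List (FreeGroup (Fin 2)),
      l₀.length = wlen (pathElt s) ∧ (∀ y ∈ l₀, y ∈ genS) ∧ l₀.prod = pathElt s :=
    Nat.sInf_mem ⟨_, hmem⟩
  obtain ⟨s', hs', hlen', hprod'⟩ :=
    exists_reducedLoop_list_prod_mul hl₀ (s := []) ⟨List.isChain_nil, by simp⟩
  obtain rfl : s' = s := pathElt_injOn hs' hs (by simp [hprod', hprod₀])
  simp only [List.length_nil, add_zero] at hlen'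
  omega

theorem exists_isReducedLoop_pathElt_eq (x : FreeGroup (Fin 2)) :
    ∃ s, IsReducedLoop s ∧ pathElt s = x := by
  induction x using FreeGroup.induction_on with
  | C1 => exact ⟨[], ⟨List.isChain_nil, by simp⟩, rfl⟩
  | of i => exact ⟨[some i, none], ⟨by simp, by simp⟩, by simp [pathElt_cons_cons, thetaEdge]⟩
  | inv_of i _ => exact ⟨[none, some i], ⟨by simp, by simp⟩, by simp [pathElt_cons_cons, thetaEdge]⟩
  | mul x y hx hy =>
    obtain ⟨s, hs, rfl⟩ := hx
    obtain ⟨t, ht, rfl⟩ := hy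
    obtain ⟨l, -, hl, hprod⟩ := exists_genS_list_of_isReducedLoop hs
    obtain ⟨s', hs', -, hprod'⟩ := exists_reducedLoop_list_prod_mul hl ht
    exact ⟨s', hs', by rw [hprod', hprod]⟩

theorem setOf_wlen_eq_image (r : ℕ) :
    {x : FreeGroup (Fin 2) | wlen x = r} =
      pathElt '' {s | s.IsChain (· ≠ ·) ∧ s.length = 2 * r} := by
  ext x
  constructor
  · intro hx
    obtain ⟨s, hs, rfl⟩ := exists_isReducedLoop_pathElt_eq x
    exact ⟨s, ⟨hs.1, by rw [← two_mul_wlen_pathElt hs, Set.mem_ofPred_eq.mp hx]⟩, rfl⟩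
  · rintro ⟨s, ⟨hs, hlen⟩, rfl⟩
    have := two_mul_wlen_pathElt ⟨hs, by simp [hlen]⟩
    simp only [Set.mem_ofPred_eq]
    omega

/-- For `F₂` with the generating set `{g, g⁻¹, h, h⁻¹, g·h⁻¹, h·g⁻¹}`, the number of
elements of word length exactly `r ≥ 1` is `6·4^(r-1)`. -/
theorem freeGroup_two_sphere_card (r : ℕ) (hr : 1 ≤ r) :
    Set.ncard {x : FreeGroup (Fin 2) | wlen x = r} = 6 * 4 ^ (r - 1) := by
  obtain ⟨m, rfl⟩ : ∃ m, r = m + 1 := ⟨r - 1, by omega⟩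
  have hinj : Set.InjOn pathElt {s | s.IsChain (· ≠ ·) ∧ s.length = 2 * (m + 1)} :=
    pathElt_injOn.mono fun _ hs => (⟨hs.1, by simp [hs.2]⟩ : IsReducedLoop _)
  have hdeg : ∀ u : Option (Fin 2), Nat.card {v // u ≠ v} = 2 := by
    intro u
    rw [Nat.card_eq_fintype_card]
    revert u
    decide
  rw [setOf_wlen_eq_image, hinj.ncard_image, ← Nat.card_coe_set_eq, Set.coe_ofPred,
    show 2 * (m + 1) = 2 * m + 1 + 1 by ring, List.card_isChain hdeg, Nat.card_eq_fintype_card,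
    Fintype.card_option, Fintype.card_fin, Nat.add_sub_cancel, pow_succ, pow_mul]
  ring
end

section
/- The volume entropy of the free group F_2 with respect to the generating set {g, g⁻¹, h, h⁻¹, g·h⁻¹, h·g⁻¹} equals ln 4. -/
open Filter Topology Finset

section WordLength

variable {M ι : Type*} [Monoid M] (e : ι → M)

noncomputable def wordLength (x : M) : ℕ :=
  sInf {n | ∃ l : List ι, l.length = n ∧ (l.map e).prod = x}

variable {e}

theorem wordLength_le_length (l : List ι) : wordLength e (l.map e).prod ≤ l.length :=
  Nat.sInf_le ⟨l, rfl, rfl⟩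

theorem exists_length_eq_wordLength {x : M} (hx : ∃ l : List ι, (l.map e).prod = x) :
    ∃ l : List ι, l.length = wordLength e x ∧ (l.map e).prod = x := by
  obtain ⟨l, hl⟩ := hx
  exact Nat.sInf_mem (s := {n | ∃ l : List ι, l.length = n ∧ (l.map e).prod = x})
    ⟨_, l, rfl, hl⟩

theorem wordLength_mul_le (i : ι) (l : List ι) :
    wordLength e (e i * (l.map e).prod) ≤ wordLength e (l.map e).prod + 1 := by
  obtain ⟨m, hm, hprod⟩ := exists_length_eq_wordLength (x := (l.map e).prod) ⟨l, rfl⟩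
  calc wordLength e (e i * (l.map e).prod) = wordLength e ((i :: m).map e).prod := by
        rw [List.map_cons, List.prod_cons, hprod]
    _ ≤ m.length + 1 := wordLength_le_length _
    _ = _ := by rw [hm]

theorem isChain_of_length_le_wordLength {R : ι → ι → Prop}
    (hR : ∀ i j, ¬ R i j → ∃ l : List ι, l.length ≤ 1 ∧ (l.map e).prod = e i * e j) :
    ∀ {l : List ι}, l.length ≤ wordLength e (l.map e).prod → l.IsChain R
  | [], _ => .nil
  | [i], _ => .singleton i
  | i :: j :: l, hl => by
    have htail : (j :: l).length ≤ wordLength e ((j :: l).map e).prod := by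
      have := wordLength_mul_le (e := e) i (j :: l)
      simp only [List.length_cons, List.map_cons, List.prod_cons] at hl this ⊢
      omega
    refine List.isChain_cons_cons.2 ⟨?_, isChain_of_length_le_wordLength hR htail⟩
    by_contra hij
    obtain ⟨m, hm, hprod⟩ := hR i j hij
    have := wordLength_le_length (e := e) (m ++ l)
    simp only [List.map_append, List.prod_append, hprod, List.length_append, List.length_cons,
      List.map_cons, List.prod_cons, mul_assoc] at this hl
    omega

theorem wordLength_eq_sInf_range (x : M) :
    wordLength e x =
      sInf {n | ∃ l : List M, l.length = n ∧ (∀ y ∈ l, y ∈ Set.range e) ∧ l.prod = x} := by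
  refine congrArg sInf (Set.ext fun n => ⟨?_, ?_⟩)
  · rintro ⟨l, rfl, rfl⟩
    exact ⟨l.map e, List.length_map _, by simp, rfl⟩
  · rintro ⟨l, rfl, hl, rfl⟩
    obtain ⟨l, rfl⟩ : l ∈ Set.range (List.map e) := by rwa [Set.range_list_map]
    exact ⟨l, (List.length_map _).symm, rfl⟩

end WordLength

section Chains

variable {α : Type*} [Fintype α] [DecidableEq α] (R : α → α → Prop) [DecidableRel R]

def chains : ℕ → Finset (List α)
  | 0 => {[]}
  | n + 1 => (chains n).biUnion fun t => (univ.filter fun x => (x :: t).IsChain R).image (· :: t)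

variable {R}

theorem mem_chains {n : ℕ} {l : List α} : l ∈ chains R n ↔ l.IsChain R ∧ l.length = n := by
  induction n generalizing l with
  | zero =>
    simp only [chains, mem_singleton, List.length_eq_zero_iff]
    exact ⟨fun h => ⟨h ▸ .nil, h⟩, And.right⟩
  | succ n ih =>
    cases l with
    | nil => simp [chains]
    | cons x t =>
      simp only [chains, mem_biUnion, mem_image, mem_filter, mem_univ, true_and, ih,
        List.cons.injEq, List.length_cons, Nat.add_right_cancel_iff]
      constructor
      · rintro ⟨_, ⟨-, hlen⟩, _, hx, rfl, rfl⟩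
        exact ⟨hx, hlen⟩
      · rintro ⟨hx, hlen⟩
        exact ⟨t, ⟨hx.tail, hlen⟩, x, hx, rfl, rfl⟩

theorem card_chains {d : ℕ} (hd : ∀ y, #{x | R x y} = d) (n : ℕ) :
    #(chains R (n + 1)) = Fintype.card α * d ^ n := by
  have hdisj (n : ℕ) : (chains R n : Set (List α)).PairwiseDisjoint
      fun t => (univ.filter fun x => (x :: t).IsChain R).image (· :: t) := by
    intro t _ t' _ hne
    simp only [Function.onFun, disjoint_left, mem_image]
    rintro _ ⟨x, -, rfl⟩ ⟨x', -, h⟩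
    exact hne (List.cons_eq_cons.1 h).2.symm
  induction n with
  | zero =>
    rw [chains, card_biUnion (hdisj 0)]
    simp [chains, card_image_of_injective _ (fun x y h => List.head_eq_of_cons_eq h)]
  | succ n ih =>
    have hcard : ∀ t ∈ chains R (n + 1),
        #((univ.filter fun x => (x :: t).IsChain R).image (· :: t)) = d := by
      intro t ht
      obtain ⟨hchain, hlen⟩ := mem_chains.1 ht
      obtain ⟨y, s, rfl⟩ := List.exists_cons_of_length_eq_add_one hlen
      rw [card_image_of_injective _ (fun x y h => List.head_eq_of_cons_eq h)]
      simpa only [List.isChain_cons_cons, hchain, and_true] using hd y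
    rw [chains, card_biUnion (hdisj _), sum_congr rfl hcard, sum_const, ih, smul_eq_mul]
    ring

end Chains

theorem tendsto_log_div_of_pow_le_of_le_mul_pow {N : ℕ → ℝ} {b c C : ℝ}
    (hc : 0 < c) (hb : 0 < b)
    (hlo : ∀ᶠ n in atTop, c * b ^ n ≤ N n) (hhi : ∀ᶠ n in atTop, N n ≤ C * n * b ^ n) :
    Tendsto (fun n => Real.log (N n) / n) atTop (𝓝 (Real.log b)) := by
  have hinv (a : ℝ) : Tendsto (fun n : ℕ => a / n) atTop (𝓝 0) :=
    tendsto_const_div_atTop_nhds_zero_nat a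
  have hlog : Tendsto (fun n : ℕ => Real.log n / n) atTop (𝓝 0) :=
    Real.isLittleO_log_id_atTop.tendsto_div_nhds_zero.comp tendsto_natCast_atTop_atTop
  refine tendsto_of_tendsto_of_tendsto_of_le_of_le'
    (by simpa using (hinv (Real.log c)).add_const (Real.log b))
    (by simpa using ((hinv (Real.log C)).add hlog).add_const (Real.log b)) ?_ ?_
  · filter_upwards [hlo, eventually_ge_atTop 1] with n hn hn1
    have hn0 : (0 : ℝ) < n := by exact_mod_cast hn1
    have : Real.log c + n * Real.log b ≤ Real.log (N n) := by
      rw [← Real.log_pow, ← Real.log_mul hc.ne' (by positivity)]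
      exact Real.log_le_log (by positivity) hn
    rw [le_div_iff₀ hn0]
    field_simp
    linarith
  · filter_upwards [hlo, hhi, eventually_ge_atTop 1] with n hn hn' hn1
    have hn0 : (0 : ℝ) < n := by exact_mod_cast hn1
    have hN : 0 < N n := lt_of_lt_of_le (by positivity) hn
    have hC : 0 < C :=
      pos_of_mul_pos_left (pos_of_mul_pos_left (hN.trans_le hn') (by positivity)) hn0.le
    have : Real.log (N n) ≤ Real.log C + Real.log n + n * Real.log b := by
      rw [← Real.log_pow, ← Real.log_mul hC.ne' hn0.ne',
        ← Real.log_mul (by positivity) (by positivity)]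
      exact Real.log_le_log hN hn'
    rw [div_le_iff₀ hn0]
    field_simp
    linarith

/-- Capital letters stand for inverses, so `gH` is the generator `g * h⁻¹`. -/
inductive Letter
  | g | G | h | H | gH | hG
  deriving DecidableEq

instance : Fintype Letter :=
  .ofList [.g, .G, .h, .H, .gH, .hG] fun x => by cases x <;> simp

namespace Letter

def spell : Letter → List (Fin 2 × Bool)
  | g => [(0, true)] | G => [(0, false)] | h => [(1, true)] | H => [(1, false)]
  | gH => [(0, true), (1, false)] | hG => [(1, true), (0, false)]

def val (x : Letter) : FreeGroup (Fin 2) := FreeGroup.mk x.spell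

theorem range_val : Set.range val = genS := by
  change _ = {val g, val G, val h, val H, val gH, val hG}
  ext y
  simp only [Set.mem_range, Set.mem_insert_iff, Set.mem_singleton_iff]
  constructor
  · rintro ⟨x, rfl⟩
    cases x <;> simp
  · rintro (rfl | rfl | rfl | rfl | rfl | rfl) <;> exact ⟨_, rfl⟩

theorem wlen_eq_wordLength : wlen = wordLength val :=
  funext fun x => by rw [wordLength_eq_sInf_range, range_val]; rfl

theorem prod_map_val (l : List Letter) : (l.map val).prod = FreeGroup.mk (l.flatMap spell) := by
  induction l with
  | nil => rfl
  | cons x l ih => rw [List.map_cons, List.prod_cons, ih, val, FreeGroup.mul_mk, List.flatMap_cons]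

theorem exists_prod_map_val_eq (w : FreeGroup (Fin 2)) :
    ∃ l : List Letter, (l.map val).prod = w := by
  induction w using FreeGroup.induction_on with
  | C1 => exact ⟨[], rfl⟩
  | of i =>
    fin_cases i
    exacts [⟨[g], List.prod_singleton⟩, ⟨[h], List.prod_singleton⟩]
  | inv_of i _ =>
    fin_cases i
    exacts [⟨[G], List.prod_singleton⟩, ⟨[H], List.prod_singleton⟩]
  | mul _ _ hx hy =>
    obtain ⟨l, rfl⟩ := hx
    obtain ⟨m, rfl⟩ := hy
    exact ⟨l ++ m, by rw [List.map_append, List.prod_append]⟩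

def Geodesic (x y : Letter) : Prop :=
  ∀ z : Option Letter, (z.toList.map val).prod ≠ x.val * y.val

instance : DecidableRel Geodesic := fun _ _ => by unfold Geodesic; infer_instance

theorem card_filter_geodesic (y : Letter) : #{x | Geodesic x y} = 4 := by
  revert y; decide +kernel

theorem exists_shortening {x y : Letter} (h : ¬ Geodesic x y) :
    ∃ l : List Letter, l.length ≤ 1 ∧ (l.map val).prod = x.val * y.val := by
  simp only [Geodesic, not_forall, not_not] at h
  obtain ⟨z, hz⟩ := h
  exact ⟨z.toList, Option.length_toList_le, hz⟩

theorem spell_ne_nil (x : Letter) : x.spell ≠ [] := by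
  cases x <;> simp [spell]

theorem isReduced_spell (x : Letter) : FreeGroup.IsReduced x.spell := by
  revert x; unfold FreeGroup.IsReduced; decide

theorem isReduced_spell_append {x y : Letter} (h : Geodesic x y) :
    FreeGroup.IsReduced (x.spell ++ y.spell) := by
  revert x y; unfold FreeGroup.IsReduced; decide +kernel

theorem isReduced_flatMap_spell : ∀ {l : List Letter}, l.IsChain Geodesic →
    FreeGroup.IsReduced (l.flatMap spell)
  | [], _ => .nil
  | [x], _ => by simpa using isReduced_spell x
  | x :: y :: l, hl => by
    rw [List.isChain_cons_cons] at hl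
    have := (isReduced_spell_append hl.1).append_overlap
      (by simpa using isReduced_flatMap_spell hl.2) (spell_ne_nil y)
    simpa [List.append_assoc] using this

theorem toWord_prod_map_val {l : List Letter} (hl : l.IsChain Geodesic) :
    ((l.map val).prod).toWord = l.flatMap spell := by
  rw [prod_map_val, FreeGroup.toWord_mk,
    FreeGroup.isReduced_iff_reduce_eq.1 (isReduced_flatMap_spell hl)]

theorem take_two_flatMap_spell (x : Letter) (l : List Letter) :
    ((x :: l).flatMap spell).take 2 = (x.spell ++ l.head?.toList.flatMap spell).take 2 := by
  cases l with
  | nil => simp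
  | cons y l =>
    have : 2 ≤ (x.spell ++ y.spell).length := by
      cases x <;> cases y <;> decide
    simp only [List.flatMap_cons, List.head?_cons, Option.toList_some, ← List.append_assoc,
      List.take_append_of_le_length this]

-- Only `g, gH` and `h, hG` share a first letter, and neither `g` nor `h` has a geodesic
-- successor spelled starting with the second letter of `gH`, resp. `hG`.
theorem eq_of_take_two_eq : ∀ x y : Letter, ∀ u v : Option Letter,
    (∀ z ∈ u, Geodesic x z) → (∀ z ∈ v, Geodesic y z) →
    (x.spell ++ u.toList.flatMap spell).take 2 = (y.spell ++ v.toList.flatMap spell).take 2 →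
    x = y := by
  decide +kernel

theorem head_eq_of_flatMap_spell_eq {x y : Letter} {l m : List Letter}
    (hl : (x :: l).IsChain Geodesic) (hm : (y :: m).IsChain Geodesic)
    (h : (x :: l).flatMap spell = (y :: m).flatMap spell) : x = y := by
  have hhead {x : Letter} {l : List Letter} (hl : (x :: l).IsChain Geodesic) :
      ∀ z ∈ l.head?, Geodesic x z := by
    cases l with
    | nil => simp
    | cons z l => simpa using (List.isChain_cons_cons.1 hl).1
  refine eq_of_take_two_eq x y _ _ (hhead hl) (hhead hm) ?_
  rw [← take_two_flatMap_spell, ← take_two_flatMap_spell, h]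

theorem flatMap_spell_injOn : Set.InjOn (List.flatMap spell) {l | l.IsChain Geodesic}
  | [], _, [], _, _ => rfl
  | [], _, y :: m, _, heq => absurd heq.symm (by simp [spell_ne_nil])
  | x :: l, _, [], _, heq => absurd heq (by simp [spell_ne_nil])
  | x :: l, hl, y :: m, hm, heq => by
    obtain rfl := head_eq_of_flatMap_spell_eq hl hm heq
    have hl' : l.IsChain Geodesic := hl.tail
    have hm' : m.IsChain Geodesic := hm.tail
    rw [flatMap_spell_injOn hl' hm'
      (List.append_cancel_left (by simpa only [List.flatMap_cons] using heq))]

theorem prod_map_val_injOn :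
    Set.InjOn (fun l : List Letter => (l.map val).prod) {l | l.IsChain Geodesic} :=
  fun l hl m hm h => flatMap_spell_injOn hl hm <| by
    rw [← toWord_prod_map_val hl, ← toWord_prod_map_val hm]
    exact congrArg FreeGroup.toWord h

theorem card_chains_geodesic (n : ℕ) : #(chains Geodesic (n + 1)) = 6 * 4 ^ n :=
  card_chains card_filter_geodesic n

end Letter

open Letter (Geodesic)

theorem ball_subset_image_chains (n : ℕ) : {x | wlen x ≤ n} ⊆
    ↑((range (n + 1)).biUnion fun k =>
      (chains Geodesic k).image fun l => (l.map Letter.val).prod) := by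
  intro x hx
  obtain ⟨l, hlen, rfl⟩ := exists_length_eq_wordLength (Letter.exists_prod_map_val_eq x)
  have hchain : l.IsChain Geodesic :=
    isChain_of_length_le_wordLength (fun _ _ => Letter.exists_shortening) hlen.le
  change wlen _ ≤ n at hx
  rw [Letter.wlen_eq_wordLength, ← hlen] at hx
  simp only [coe_biUnion, coe_range, Set.mem_Iio, coe_image, Set.mem_iUnion, Set.mem_image,
    mem_coe, mem_chains]
  exact ⟨l.length, by omega, l, ⟨hchain, rfl⟩, rfl⟩

theorem image_chains_subset_ball (n : ℕ) :
    ↑((chains Geodesic n).image fun l => (l.map Letter.val).prod) ⊆ {x | wlen x ≤ n} := by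
  simp only [coe_image, Set.image_subset_iff]
  intro l hl
  rw [mem_coe, mem_chains] at hl
  simpa [Letter.wlen_eq_wordLength, ← hl.2] using wordLength_le_length l

theorem finite_ball (n : ℕ) : {x | wlen x ≤ n}.Finite :=
  (finite_toSet _).subset (ball_subset_image_chains n)

theorem ncard_ball_le (n : ℕ) : {x | wlen x ≤ n}.ncard ≤ 6 * (n + 1) * 4 ^ n := by
  have hchains : ∀ k ∈ range (n + 1), #(chains Geodesic k) ≤ 6 * 4 ^ n := by
    intro k hk
    cases k with
    | zero => simp only [chains, card_singleton]; exact Nat.succ_le_of_lt (by positivity)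
    | succ k =>
      rw [Letter.card_chains_geodesic]
      exact Nat.mul_le_mul_left 6 (Nat.pow_le_pow_right (by norm_num) (by rw [mem_range] at hk; omega))
  calc {x | wlen x ≤ n}.ncard
      ≤ #((range (n + 1)).biUnion fun k =>
          (chains Geodesic k).image fun l => (l.map Letter.val).prod) := by
        rw [← Set.ncard_coe_finset]
        exact Set.ncard_le_ncard (ball_subset_image_chains n)
    _ ≤ ∑ k ∈ range (n + 1), #(chains Geodesic k) :=
        card_biUnion_le.trans (sum_le_sum fun _ _ => card_image_le)
    _ ≤ ∑ k ∈ range (n + 1), 6 * 4 ^ n := sum_le_sum hchains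
    _ = 6 * (n + 1) * 4 ^ n := by rw [sum_const, card_range, smul_eq_mul]; ring

theorem le_ncard_ball (n : ℕ) : 6 * 4 ^ n ≤ {x | wlen x ≤ n + 1}.ncard := by
  rw [← Letter.card_chains_geodesic,
    ← card_image_of_injOn (Letter.prod_map_val_injOn.mono fun _ hl => (mem_chains.1 hl).1),
    ← Set.ncard_coe_finset]
  exact Set.ncard_le_ncard (image_chains_subset_ball _) (finite_ball _)

/-- The volume entropy of `F₂` with respect to the generating set
`{g, g⁻¹, h, h⁻¹, g·h⁻¹, h·g⁻¹}` equals `ln 4`. -/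
theorem freeGroup_two_volume_entropy :
    Filter.Tendsto
      (fun n : ℕ => Real.log (Set.ncard {x : FreeGroup (Fin 2) | wlen x ≤ n}) / n)
      Filter.atTop (nhds (Real.log 4)) := by
  refine tendsto_log_div_of_pow_le_of_le_mul_pow (c := 1) (C := 12) one_pos (by norm_num) ?_ ?_
  · filter_upwards [eventually_ge_atTop 1] with n hn
    obtain ⟨m, rfl⟩ := Nat.exists_eq_add_of_le' hn
    have h4 : 4 ^ (m + 1) ≤ 6 * 4 ^ m := by rw [pow_succ]; omega
    rw [one_mul]
    exact_mod_cast h4.trans (le_ncard_ball m)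
  · filter_upwards [eventually_ge_atTop 1] with n hn
    have h12 : 6 * (n + 1) * 4 ^ n ≤ 12 * n * 4 ^ n := Nat.mul_le_mul_right _ (by omega)
    exact_mod_cast (ncard_ball_le n).trans h12
end

section
/- For the free group F_2 with generating set {g, g⁻¹, h, h⁻¹, g·h⁻¹, h·g⁻¹}, the Poincaré series Σ_{x ∈ F_2} e^{-s|x|} converges if and only if s > ln 4. -/
/-!
Spell elements of `F₂` in the six generators and call a spelling admissible if no two consecutive
letters cancel or merge into a single generator (for instance `g` may not be followed by `g⁻¹` or
`h⁻¹`); every letter then has exactly four admissible successors. A geodesic spelling is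
admissible, and distinct admissible spellings give distinct elements because their
concatenated letter words are reduced and can be parsed back greedily. Hence the sphere of
radius `n + 1` has at most `6 * 4 ^ n` elements, the ball of radius `n` fewer than `2 * 4 ^ n`,
and since all `6 * 4 ^ n` admissible spellings of length `n + 1` lie in the ball of radius
`n + 1`, the sphere has at least `4 ^ (n + 1)` elements. Sphere sizes of exact order `4 ^ n`
make the Poincaré series comparable to `Σ e^{n (log 4 - s)}`.
-/

section PoincareSeries

open Real

theorem summable_iff_of_le_mul_of_mul_le {f g : ℕ → ℝ} {c C : ℝ} (hc : 0 < c)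
    (hg : ∀ n, 0 ≤ g n) (hlow : ∀ n, c * g n ≤ f n) (hup : ∀ n, f n ≤ C * g n) :
    Summable f ↔ Summable g := by
  have hf (n : ℕ) : 0 ≤ f n := (mul_nonneg hc.le (hg n)).trans (hlow n)
  refine ⟨fun hf' => ?_, fun hg' => (hg'.mul_left C).of_nonneg_of_le hf hup⟩
  exact (summable_mul_left_iff hc.ne').mp
    (hf'.of_nonneg_of_le (fun n => mul_nonneg hc.le (hg n)) hlow)

theorem summable_exp_neg_mul_iff_of_ncard_bounds {α : Type*} (len : α → ℕ) {b c C : ℝ}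
    (hb : 0 < b) (hc : 0 < c) (hlow : ∀ n, c * b ^ n ≤ (len ⁻¹' {n}).ncard)
    (hup : ∀ n, ((len ⁻¹' {n}).ncard : ℝ) ≤ C * b ^ n) (s : ℝ) :
    Summable (fun x => exp (-s * len x)) ↔ log b < s := by
  have hfin (n : ℕ) : (len ⁻¹' {n}).Finite := Set.finite_of_ncard_pos <| by
    exact_mod_cast (by positivity : 0 < c * b ^ n).trans_le (hlow n)
  have hfiber (n : ℕ) :
      ∑' x : len ⁻¹' {n}, exp (-s * len x) = (len ⁻¹' {n}).ncard * exp (-s * n) := by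
    have := (hfin n).fintype
    rw [tsum_congr fun x : len ⁻¹' {n} => by rw [show len x = n from x.2], tsum_fintype,
      Finset.sum_const, Finset.card_univ, nsmul_eq_mul, Set.ncard_eq_toFinset_card',
      Set.toFinset_card]
  have hpow (n : ℕ) : b ^ n * exp (-s * n) = exp (n * (log b - s)) := by
    rw [← exp_log hb, ← exp_nat_mul, log_exp, ← exp_add]
    ring_nf
  have hsummand_low (n : ℕ) :
      c * exp (n * (log b - s)) ≤ (len ⁻¹' {n}).ncard * exp (-s * n) := by
    rw [← hpow, ← mul_assoc]
    exact mul_le_mul_of_nonneg_right (hlow n) (exp_pos _).le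
  have hsummand_up (n : ℕ) :
      (len ⁻¹' {n}).ncard * exp (-s * n) ≤ C * exp (n * (log b - s)) := by
    rw [← hpow, ← mul_assoc]
    exact mul_le_mul_of_nonneg_right (hup n) (exp_pos _).le
  rw [summable_partition (s := fun n => len ⁻¹' {n}) (fun _ => (exp_pos _).le)
      fun x => ⟨len x, rfl, fun n hn => hn.symm⟩,
    and_iff_right fun n => have := (hfin n).to_subtype; .of_finite]
  simp only [hfiber]
  rw [summable_iff_of_le_mul_of_mul_le hc (fun n => (exp_pos _).le) hsummand_low hsummand_up,
    summable_exp_nat_mul_iff, sub_neg]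

end PoincareSeries

namespace genS

/-- The letters `0, …, 5` stand for `g, g⁻¹, h, h⁻¹, g h⁻¹, h g⁻¹`. -/
def letterWord : Fin 6 → List (Fin 2 × Bool)
  | 0 => [(0, true)]
  | 1 => [(0, false)]
  | 2 => [(1, true)]
  | 3 => [(1, false)]
  | 4 => [(0, true), (1, false)]
  | 5 => [(1, true), (0, false)]

def letter (i : Fin 6) : FreeGroup (Fin 2) := FreeGroup.mk (letterWord i)

theorem range_letter : Set.range letter = genS := by
  have h : ∀ i, letter i = ![fgG, fgG⁻¹, fgH, fgH⁻¹, fgG * fgH⁻¹, fgH * fgG⁻¹] i := by decide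
  rw [funext h]
  simp only [Matrix.range_cons, Matrix.range_empty, Set.union_empty, Set.singleton_union, genS]

theorem letterWord_ne_nil (i : Fin 6) : letterWord i ≠ [] := by
  fin_cases i <;> simp [letterWord]

/-- `follower i` lists the letters `j` for which `letter i * letter j` is neither `1` nor a
generator. -/
def follower : Fin 6 → Fin 4 → Fin 6
  | 0 => ![0, 2, 4, 5]
  | 1 => ![1, 2, 3, 5]
  | 2 => ![0, 2, 4, 5]
  | 3 => ![0, 1, 3, 4]
  | 4 => ![0, 1, 3, 4]
  | 5 => ![1, 2, 3, 5]

def Follows (i j : Fin 6) : Prop := ∃ k, follower i k = j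

instance : DecidableRel Follows := fun _ _ => Fintype.decidableExistsFintype

theorem follower_injective (i : Fin 6) : Function.Injective (follower i) := by
  revert i; decide

theorem exists_prod_eq_letter_mul_letter {i j : Fin 6} (h : ¬ Follows i j) :
    ∃ v : Option (Fin 6), (v.toList.map letter).prod = letter i * letter j := by
  revert i j; decide

/-- Greedy parsing is correct since `h⁻¹` never follows `g` and `g⁻¹` never follows `h`. -/
def leadingLetter : List (Fin 2 × Bool) → Fin 6
  | (0, true) :: (1, false) :: _ => 4
  | (1, true) :: (0, false) :: _ => 5
  | (0, true) :: _ => 0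
  | (0, false) :: _ => 1
  | (1, true) :: _ => 2
  | _ => 3

theorem leadingLetter_letterWord (i : Fin 6) : leadingLetter (letterWord i) = i := by
  revert i; decide

theorem leadingLetter_letterWord_append {i j : Fin 6} (h : Follows i j)
    (L : List (Fin 2 × Bool)) : leadingLetter (letterWord i ++ letterWord j ++ L) = i := by
  fin_cases i <;> fin_cases j <;> first | rfl | exact absurd h (by decide)

theorem isReduced_letterWord (i : Fin 6) : FreeGroup.IsReduced (letterWord i) := by
  revert i; unfold FreeGroup.IsReduced; decide

theorem isReduced_letterWord_append {i j : Fin 6} (h : Follows i j) :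
    FreeGroup.IsReduced (letterWord i ++ letterWord j) := by
  revert i j; unfold FreeGroup.IsReduced; decide

theorem prod_map_letter (w : List (Fin 6)) :
    (w.map letter).prod = FreeGroup.mk (w.flatMap letterWord) := by
  induction w with
  | nil => rfl
  | cons i w ih =>
    rw [List.map_cons, List.prod_cons, ih, List.flatMap_cons, letter, FreeGroup.mul_mk]

theorem isReduced_flatMap_letterWord {w : List (Fin 6)} (hw : w.IsChain Follows) :
    FreeGroup.IsReduced (w.flatMap letterWord) := by
  induction w with
  | nil => exact .nil
  | cons i w ih =>
    cases w with
    | nil => simpa using isReduced_letterWord i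
    | cons j w =>
      rw [List.isChain_cons_cons] at hw
      rw [List.flatMap_cons, List.flatMap_cons, ← List.append_assoc]
      exact (isReduced_letterWord_append hw.1).append_overlap (ih hw.2) (letterWord_ne_nil j)

theorem leadingLetter_flatMap_letterWord {i : Fin 6} {w : List (Fin 6)}
    (hw : (i :: w).IsChain Follows) : leadingLetter ((i :: w).flatMap letterWord) = i := by
  cases w with
  | nil => simpa using leadingLetter_letterWord i
  | cons j w =>
    simpa [List.flatMap_cons, List.append_assoc] using
      leadingLetter_letterWord_append (List.isChain_cons_cons.mp hw).1 (w.flatMap letterWord)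

theorem flatMap_letterWord_injOn :
    {w : List (Fin 6) | w.IsChain Follows}.InjOn (List.flatMap letterWord) := by
  intro w₁ hw₁ w₂ hw₂ h
  induction w₁ generalizing w₂ with
  | nil =>
    cases w₂ with
    | nil => rfl
    | cons j w₂ => simp [letterWord_ne_nil] at h
  | cons i w₁ ih =>
    cases w₂ with
    | nil => simp [letterWord_ne_nil] at h
    | cons j w₂ =>
      obtain rfl : i = j := by
        rw [← leadingLetter_flatMap_letterWord hw₁, h, leadingLetter_flatMap_letterWord hw₂]
      rw [List.flatMap_cons, List.flatMap_cons, List.append_cancel_left_eq] at h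
      exact congrArg (i :: ·) (ih (List.IsChain.tail hw₁) (List.IsChain.tail hw₂) h)

theorem toWord_prod_map_letter {w : List (Fin 6)} (hw : w.IsChain Follows) :
    (w.map letter).prod.toWord = w.flatMap letterWord := by
  rw [prod_map_letter, FreeGroup.toWord_mk,
    FreeGroup.isReduced_iff_reduce_eq.mp (isReduced_flatMap_letterWord hw)]

theorem prod_map_letter_injOn :
    {w : List (Fin 6) | w.IsChain Follows}.InjOn fun w => (w.map letter).prod :=
  fun w₁ hw₁ w₂ hw₂ h => flatMap_letterWord_injOn hw₁ hw₂ <| by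
    rw [← toWord_prod_map_letter hw₁, ← toWord_prod_map_letter hw₂]
    exact congrArg FreeGroup.toWord h

theorem exists_prod_map_letter_eq (x : FreeGroup (Fin 2)) :
    ∃ w : List (Fin 6), (w.map letter).prod = x := by
  induction x using FreeGroup.induction_on with
  | C1 => exact ⟨[], rfl⟩
  | of a => fin_cases a; exacts [⟨[0], by decide⟩, ⟨[2], by decide⟩]
  | inv_of a _ => fin_cases a; exacts [⟨[1], by decide⟩, ⟨[3], by decide⟩]
  | mul x y hx hy =>
    obtain ⟨u, rfl⟩ := hx
    obtain ⟨v, rfl⟩ := hy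
    exact ⟨u ++ v, by rw [List.map_append, List.prod_append]⟩

def path (i : Fin 6) (ks : List (Fin 4)) : List (Fin 6) := ks.scanl follower i

theorem length_path (i : Fin 6) (ks : List (Fin 4)) : (path i ks).length = ks.length + 1 :=
  List.length_scanl

theorem path_cons (i : Fin 6) (k : Fin 4) (ks : List (Fin 4)) :
    path i (k :: ks) = i :: path (follower i k) ks :=
  List.scanl_cons

theorem isChain_path (i : Fin 6) (ks : List (Fin 4)) : (path i ks).IsChain Follows := by
  induction ks generalizing i with
  | nil => exact .singleton i
  | cons k ks ih =>
    rw [path_cons, List.isChain_cons, path, List.head?_scanl]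
    exact ⟨fun j hj => ⟨k, Option.mem_some_iff.mp hj⟩, ih _⟩

theorem path_injective2 : Function.Injective2 path := by
  intro i i' ks ks' h
  induction ks generalizing i i' ks' with
  | nil =>
    cases ks' with
    | nil => exact ⟨List.singleton_inj.mp h, rfl⟩
    | cons k' ks' => simpa [path] using congrArg List.length h
  | cons k ks ih =>
    cases ks' with
    | nil => simpa [path] using congrArg List.length h
    | cons k' ks' =>
      rw [path_cons, path_cons, List.cons.injEq] at h
      obtain ⟨rfl, h⟩ := h
      obtain ⟨hk, rfl⟩ := ih h
      exact ⟨rfl, by rw [follower_injective i hk]⟩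

theorem exists_path_eq {i : Fin 6} {w : List (Fin 6)} (hw : (i :: w).IsChain Follows) :
    ∃ ks, path i ks = i :: w := by
  induction w generalizing i with
  | nil => exact ⟨[], rfl⟩
  | cons j w ih =>
    obtain ⟨⟨k, rfl⟩, hw⟩ := List.isChain_cons_cons.mp hw
    obtain ⟨ks, hks⟩ := ih hw
    exact ⟨k :: ks, by rw [path_cons, hks]⟩

end genS

open genS

theorem wlen_prod_map_letter_le (w : List (Fin 6)) : wlen (w.map letter).prod ≤ w.length :=
  Nat.sInf_le ⟨w.map letter, List.length_map _,
    List.forall_mem_map.mpr fun i _ => range_letter ▸ Set.mem_range_self i, rfl⟩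

theorem exists_length_eq_wlen (x : FreeGroup (Fin 2)) :
    ∃ w : List (Fin 6), (w.map letter).prod = x ∧ w.length = wlen x := by
  obtain ⟨w, hw⟩ := exists_prod_map_letter_eq x
  obtain ⟨l, hlen, hl, hprod⟩ : wlen x ∈ {n | ∃ l : List (FreeGroup (Fin 2)),
      l.length = n ∧ (∀ y ∈ l, y ∈ genS) ∧ l.prod = x} :=
    Nat.sInf_mem ⟨w.length, w.map letter, List.length_map _,
      List.forall_mem_map.mpr fun i _ => range_letter ▸ Set.mem_range_self i, hw⟩
  obtain ⟨v, rfl⟩ : l ∈ Set.range (List.map letter) := by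
    rwa [Set.range_list_map, range_letter]
  exact ⟨v, hprod, by rwa [List.length_map] at hlen⟩

theorem isChain_follows_of_length_eq_wlen {w : List (Fin 6)}
    (hw : w.length = wlen (w.map letter).prod) : w.IsChain Follows := by
  refine List.isChain_iff_forall_rel_of_append_cons_cons.mpr fun i j u v huv => ?_
  by_contra hij
  obtain ⟨o, ho⟩ := exists_prod_eq_letter_mul_letter hij
  have hprod : ((u ++ o.toList ++ v).map letter).prod = (w.map letter).prod := by
    simp only [huv, List.map_append, List.map_cons, List.prod_append, List.prod_cons, ho, mul_assoc]
  have hle := wlen_prod_map_letter_le (u ++ o.toList ++ v)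
  rw [hprod, ← hw, huv] at hle
  simp only [List.length_append, List.length_cons] at hle
  have := o.length_toList_le
  omega

theorem wlen_eq_zero_iff {x : FreeGroup (Fin 2)} : wlen x = 0 ↔ x = 1 := by
  refine ⟨fun hx => ?_, ?_⟩
  · obtain ⟨w, rfl, hw⟩ := exists_length_eq_wlen x
    rw [hx, List.length_eq_zero_iff] at hw
    rw [hw, List.map_nil, List.prod_nil]
  · rintro rfl
    exact Nat.le_zero.mp (wlen_prod_map_letter_le [])

def chainProducts (m : ℕ) : Finset (FreeGroup (Fin 2)) :=
  Finset.univ.image fun p : Fin 6 × List.Vector (Fin 4) m =>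
    ((path p.1 p.2.toList).map letter).prod

theorem card_chainProducts (m : ℕ) : (chainProducts m).card = 6 * 4 ^ m := by
  rw [chainProducts, Finset.card_image_of_injective, Finset.card_univ, Fintype.card_prod,
    card_vector, Fintype.card_fin, Fintype.card_fin]
  rintro ⟨i, ks⟩ ⟨i', ks'⟩ h
  obtain ⟨rfl, h⟩ :=
    path_injective2 (prod_map_letter_injOn (isChain_path i _) (isChain_path i' _) h)
  exact Prod.ext rfl (List.Vector.toList_injective h)

theorem wlen_le_of_mem_chainProducts {m : ℕ} {x : FreeGroup (Fin 2)}
    (hx : x ∈ chainProducts m) : wlen x ≤ m + 1 := by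
  obtain ⟨⟨i, ks⟩, -, rfl⟩ := Finset.mem_image.mp hx
  simpa [length_path] using wlen_prod_map_letter_le (path i ks.toList)

theorem wlen_preimage_succ_subset (m : ℕ) : wlen ⁻¹' {m + 1} ⊆ chainProducts m := by
  intro x hx
  obtain ⟨w, rfl, hw⟩ := exists_length_eq_wlen x
  obtain ⟨i, w, rfl⟩ := List.exists_cons_of_length_eq_add_one (hw.trans hx)
  obtain ⟨ks, hks⟩ := exists_path_eq (isChain_follows_of_length_eq_wlen hw)
  have hlen : ks.length = m := by
    simpa [← hks, length_path] using hw.trans hx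
  exact Finset.mem_image.mpr ⟨(i, ⟨ks, hlen⟩), Finset.mem_univ _, by rw [← hks]; rfl⟩

theorem wlen_preimage_zero : wlen ⁻¹' {0} = {1} :=
  Set.ext fun _ => wlen_eq_zero_iff

theorem wlen_preimage_Iic_succ (m : ℕ) :
    wlen ⁻¹' Set.Iic (m + 1) = wlen ⁻¹' Set.Iic m ∪ wlen ⁻¹' {m + 1} := by
  ext x
  simp only [Set.mem_preimage, Set.mem_Iic, Set.mem_union, Set.mem_singleton_iff]
  omega

theorem finite_wlen_preimage_Iic (m : ℕ) : (wlen ⁻¹' Set.Iic m).Finite := by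
  refine (Set.finite_Iic m).preimage' fun n _ => ?_
  cases n with
  | zero => simp [wlen_preimage_zero]
  | succ n => exact (chainProducts n).finite_toSet.subset (wlen_preimage_succ_subset n)

theorem ncard_wlen_preimage_succ_le (m : ℕ) : (wlen ⁻¹' {m + 1}).ncard ≤ 6 * 4 ^ m := by
  rw [← card_chainProducts, ← Set.ncard_coe_finset]
  exact Set.ncard_le_ncard (wlen_preimage_succ_subset m)

theorem ncard_wlen_preimage_Iic_lt (m : ℕ) : (wlen ⁻¹' Set.Iic m).ncard < 2 * 4 ^ m := by
  induction m with
  | zero =>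
    rw [show Set.Iic 0 = {0} from Set.Iic_bot, wlen_preimage_zero, Set.ncard_singleton]
    omega
  | succ m ih =>
    rw [wlen_preimage_Iic_succ, pow_succ]
    have := Set.ncard_union_le (wlen ⁻¹' Set.Iic m) (wlen ⁻¹' {m + 1})
    have := ncard_wlen_preimage_succ_le m
    omega

theorem pow_le_ncard_wlen_preimage_succ (m : ℕ) : 4 ^ (m + 1) ≤ (wlen ⁻¹' {m + 1}).ncard := by
  have hsub : ↑(chainProducts m) ⊆ wlen ⁻¹' Set.Iic (m + 1) :=
    fun x hx => wlen_le_of_mem_chainProducts hx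
  have hcard := Set.ncard_le_ncard hsub (finite_wlen_preimage_Iic (m + 1))
  rw [Set.ncard_coe_finset, card_chainProducts, wlen_preimage_Iic_succ] at hcard
  have := Set.ncard_union_le (wlen ⁻¹' Set.Iic m) (wlen ⁻¹' {m + 1})
  have := ncard_wlen_preimage_Iic_lt m
  rw [pow_succ]
  omega

theorem pow_le_ncard_wlen_preimage (n : ℕ) : 4 ^ n ≤ (wlen ⁻¹' {n}).ncard := by
  cases n with
  | zero => simp [wlen_preimage_zero]
  | succ m => exact pow_le_ncard_wlen_preimage_succ m

theorem ncard_wlen_preimage_le (n : ℕ) : (wlen ⁻¹' {n}).ncard ≤ 6 * 4 ^ n := by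
  cases n with
  | zero => simp [wlen_preimage_zero]
  | succ m => exact (ncard_wlen_preimage_succ_le m).trans (by rw [pow_succ]; omega)

/-- For `F₂` with the generating set `{g, g⁻¹, h, h⁻¹, g·h⁻¹, h·g⁻¹}`, the Poincaré
series `Σ_x e^{-s|x|}` converges iff `s > ln 4`. -/
theorem freeGroup_two_poincare_series (s : ℝ) :
    Summable (fun x : FreeGroup (Fin 2) => Real.exp (-s * wlen x)) ↔ Real.log 4 < s :=
  summable_exp_neg_mul_iff_of_ncard_bounds wlen (C := 6) four_pos one_pos
    (fun n => by exact_mod_cast (one_mul _).trans_le (pow_le_ncard_wlen_preimage n))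
    (fun n => by exact_mod_cast ncard_wlen_preimage_le n) s
end
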